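/- Let K, B, d be positive integers with B dividing K, and for k ∈ {1,…,K} let [k] := B·⌊(k−1)/B⌋ + 1. Let λ > 0, H > 0, and let φ^(1),…,φ^(K) ∈ ℝ^d satisfy ‖φ^(k)‖₂² ≤ H for all k. Define V_0 := λ·I_d and V_k := λ·I_d + ∑_{j=1}^{k} φ^(j)(φ^(j))ᵀ, and the bad-round set Ψ := {k ∈ {1,…,K} : ‖φ^(k)‖_{V_{[k]−1}^{-1}} > 2·‖φ^(k)‖_{V_{k−1}^{-1}}}. Then |Ψ| ≤ (B·d / (2·log 2))·log(1 + K·H/(d·λ)). -/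

import Mathlib

open scoped BigOperators Matrix

noncomputable section

/-- Batch start of episode `k` under fixed batch size `B`:
`[k] := B * ⌊(k-1)/B⌋ + 1`. -/
def batchStart (B k : ℕ) : ℕ := B * ((k - 1) / B) + 1

/-- Design matrix `V_k := λ·I_d + ∑_{j=1}^{k} φ^(j) (φ^(j))ᵀ` (so `V_0 = λ·I_d`). -/
def designMat (d : ℕ) (lam : ℝ) (φ : ℕ → Fin d → ℝ) (k : ℕ) :
    Matrix (Fin d) (Fin d) ℝ :=
  lam • (1 : Matrix (Fin d) (Fin d) ℝ) +
    ∑ j ∈ Finset.Icc 1 k, Matrix.vecMulVec (φ j) (φ j)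

/-- `‖v‖_A := √(vᵀ A v)`. -/
def matNorm {d : ℕ} (A : Matrix (Fin d) (Fin d) ℝ) (v : Fin d → ℝ) : ℝ :=
  Real.sqrt (v ⬝ᵥ A.mulVec v)

/-!
Along a rank-one update `A ↦ A + u uᵀ` the determinant is multiplied by `1 + uᵀA⁻¹u` (matrix
determinant lemma), while by Cauchy–Schwarz the form `xᵀA⁻¹x` shrinks by at most that factor. So
`k ↦ det V_k · xᵀV_k⁻¹x` is nondecreasing, and a bad round `k` forces
`det V_{k-1} > 4 det V_{[k]-1}`: across every batch containing a bad round the determinant more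
than quadruples. A batch has `B` rounds, so `|Ψ| ≤ B n` with `n` the number of such batches, and
`4ⁿ λᵈ ≤ det V_K ≤ (tr V_K / d)ᵈ ≤ (λ + KH/d)ᵈ` by AM–GM on the eigenvalues of `V_K`.
-/

open Matrix Finset

theorem Real.prod_le_sum_div_card_pow {ι : Type*} (s : Finset ι) (z : ι → ℝ)
    (hz : ∀ i ∈ s, 0 ≤ z i) : ∏ i ∈ s, z i ≤ ((∑ i ∈ s, z i) / #s) ^ #s := by
  rcases s.eq_empty_or_nonempty with rfl | hs
  · simp
  have hcard : (#s : ℝ) ≠ 0 := by exact_mod_cast hs.card_pos.ne'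
  have hgm := Real.geom_mean_le_arith_mean_weighted s (fun _ => (#s : ℝ)⁻¹) z
    (fun _ _ => by positivity) (by simp [hcard]) hz
  rw [Real.finsetProd_rpow s z hz, ← Finset.mul_sum, inv_mul_eq_div] at hgm
  calc ∏ i ∈ s, z i = ((∏ i ∈ s, z i) ^ (#s : ℝ)⁻¹) ^ #s :=
        (Real.rpow_inv_natCast_pow (prod_nonneg hz) hs.card_pos.ne').symm
    _ ≤ _ := pow_le_pow_left₀ (Real.rpow_nonneg (prod_nonneg hz) _) hgm _

namespace Matrix

variable {n : Type*} [Fintype n]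

theorem IsHermitian.dotProduct_mulVec_comm {A : Matrix n n ℝ} (hA : A.IsHermitian) (x y : n → ℝ) :
    y ⬝ᵥ A *ᵥ x = x ⬝ᵥ A *ᵥ y := by
  rw [dotProduct_mulVec, ← mulVec_transpose, dotProduct_comm,
    ← conjTranspose_eq_transpose_of_trivial, hA]

theorem PosSemidef.dotProduct_mulVec_sq_le {A : Matrix n n ℝ} (hA : A.PosSemidef) (x y : n → ℝ) :
    (x ⬝ᵥ A *ᵥ y) ^ 2 ≤ (x ⬝ᵥ A *ᵥ x) * (y ⬝ᵥ A *ᵥ y) := by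
  have hquad : ∀ t : ℝ, 0 ≤ (x ⬝ᵥ A *ᵥ x) * (t * t) + 2 * (x ⬝ᵥ A *ᵥ y) * t + y ⬝ᵥ A *ᵥ y := by
    intro t
    have := hA.dotProduct_mulVec_nonneg (t • x + y)
    simp only [star_trivial, mulVec_add, mulVec_smul, dotProduct_add, add_dotProduct,
      dotProduct_smul, smul_dotProduct, smul_eq_mul, hA.1.dotProduct_mulVec_comm x y] at this
    linarith
  have := discrim_le_zero hquad
  rw [discrim] at this
  nlinarith

variable [DecidableEq n]

theorem det_add_vecMulVec_self {R : Type*} [CommRing R] {A : Matrix n n R} (hA : IsUnit A.det)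
    (u : n → R) : (A + vecMulVec u u).det = A.det * (1 + u ⬝ᵥ A⁻¹ *ᵥ u) := by
  rw [vecMulVec_eq Unit, det_add_replicateCol_mul_replicateRow hA, Matrix.mul_assoc,
    ← replicateCol_mulVec]
  simp [det_unique]

theorem PosSemidef.det_le_trace_div_card_pow {M : Matrix n n ℝ} (hM : M.PosSemidef) :
    M.det ≤ (M.trace / Fintype.card n) ^ Fintype.card n := by
  rw [hM.1.det_eq_prod_eigenvalues, hM.1.trace_eq_sum_eigenvalues]
  simpa using Real.prod_le_sum_div_card_pow univ _ fun i _ => hM.eigenvalues_nonneg i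

theorem PosDef.dotProduct_inv_mulVec_le_mul_add_vecMulVec {A : Matrix n n ℝ} (hA : A.PosDef)
    (u x : n → ℝ) :
    x ⬝ᵥ A⁻¹ *ᵥ x ≤ (1 + u ⬝ᵥ A⁻¹ *ᵥ u) * (x ⬝ᵥ (A + vecMulVec u u)⁻¹ *ᵥ x) := by
  have hA' : (A + vecMulVec u u).PosDef := by
    simpa using hA.add_posSemidef (posSemidef_vecMulVec_self_star u)
  -- With `y := (A + uuᵀ)⁻¹x`, `s := u ⬝ y` and `w := A⁻¹u` one has `x = A(y + s w)`; both sides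
  -- become quadratic in `s`, and the claim reduces to `s² ≤ (wᵀAw)(yᵀAy)`, Cauchy–Schwarz for `A`.
  set y := (A + vecMulVec u u)⁻¹ *ᵥ x
  set w := A⁻¹ *ᵥ u
  set s := u ⬝ᵥ y
  have hAw : A *ᵥ w = u := by
    rw [mulVec_mulVec, mul_nonsing_inv _ hA.det_pos.ne'.isUnit, one_mulVec]
  have hx : A *ᵥ (y + s • w) = x := by
    have : (A + vecMulVec u u) *ᵥ y = x := by
      rw [mulVec_mulVec, mul_nonsing_inv _ hA'.det_pos.ne'.isUnit, one_mulVec]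
    rw [← this, add_mulVec, vecMulVec_mulVec, mulVec_add, mulVec_smul, hAw]
    simp [s]
  have hinv : A⁻¹ *ᵥ x = y + s • w := by
    rw [← hx, mulVec_mulVec, nonsing_inv_mul _ hA.det_pos.ne'.isUnit, one_mulVec]
  have hs : w ⬝ᵥ A *ᵥ y = s := by
    rw [hA.1.dotProduct_mulVec_comm, hAw, dotProduct_comm]
  have hc : w ⬝ᵥ A *ᵥ w = u ⬝ᵥ w := by rw [hAw, dotProduct_comm]
  have hCS := hA.posSemidef.dotProduct_mulVec_sq_le w y
  have hL : x ⬝ᵥ A⁻¹ *ᵥ x = y ⬝ᵥ A *ᵥ y + 2 * s * s + s * s * (u ⬝ᵥ w) := by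
    rw [hinv]
    conv_lhs => rw [← hx]
    rw [dotProduct_comm]
    simp only [mulVec_add, mulVec_smul, dotProduct_add, add_dotProduct, dotProduct_smul,
      smul_dotProduct, smul_eq_mul, hAw, hs, dotProduct_comm y u, dotProduct_comm w u]
    ring
  have hR : x ⬝ᵥ y = y ⬝ᵥ A *ᵥ y + s * s := by
    rw [← hx, dotProduct_comm]
    simp only [mulVec_add, mulVec_smul, dotProduct_add, dotProduct_smul, smul_eq_mul, hAw,
      dotProduct_comm y u]
    rfl
  change _ ≤ _ * (x ⬝ᵥ y)
  rw [hL, hR]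
  rw [hs, hc] at hCS
  nlinarith

end Matrix

theorem pow_card_mul_le_of_monotone {α : Type*} [Semiring α] [PartialOrder α] [IsOrderedRing α]
    {f : ℕ → α} (hf : Monotone f) {c : α} (hc : 0 ≤ c) {s : Finset ℕ} {n : ℕ}
    (hs : s ⊆ range n) (hjump : ∀ b ∈ s, c * f b ≤ f (b + 1)) : c ^ #s * f 0 ≤ f n := by
  induction n generalizing s with
  | zero => simp_all
  | succ n ih =>
    rw [range_add_one] at hs
    by_cases hn : n ∈ s
    · calc c ^ #s * f 0 = c * (c ^ #(s.erase n) * f 0) := by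
            rw [← card_erase_add_one hn, pow_succ', mul_assoc]
        _ ≤ c * f n := by
            gcongr
            exact ih (subset_insert_iff.mp hs) fun b hb => hjump b (mem_of_mem_erase hb)
        _ ≤ f (n + 1) := hjump n hn
    · exact (ih ((subset_insert_iff_of_notMem hn).mp hs) hjump).trans (hf n.le_succ)

theorem card_filter_sub_one_div_eq_le {B : ℕ} (hB : 0 < B) {s : Finset ℕ} (hs : ∀ k ∈ s, 1 ≤ k)
    (b : ℕ) : #{k ∈ s | (k - 1) / B = b} ≤ B := by
  calc #{k ∈ s | (k - 1) / B = b} ≤ #(Icc (B * b + 1) (B * b + B)) := by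
        refine card_le_card fun k hk => ?_
        obtain ⟨hks, rfl⟩ := mem_filter.mp hk
        have := Nat.div_add_mod (k - 1) B
        have := Nat.mod_lt (k - 1) hB
        have := hs k hks
        rw [mem_Icc]
        omega
    _ = B := by simp

section designMat

variable {d : ℕ} {lam : ℝ} (φ : ℕ → Fin d → ℝ)

theorem designMat_zero : designMat d lam φ 0 = lam • 1 := by
  simp [designMat]

theorem designMat_succ (k : ℕ) :
    designMat d lam φ (k + 1) = designMat d lam φ k + vecMulVec (φ (k + 1)) (φ (k + 1)) := by
  rw [designMat, designMat, sum_Icc_succ_top (Nat.le_add_left 1 k), add_assoc]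

theorem trace_designMat (k : ℕ) :
    (designMat d lam φ k).trace = lam * d + ∑ j ∈ Icc 1 k, φ j ⬝ᵥ φ j := by
  simp [designMat, trace_sum, trace_vecMulVec]

variable {φ}

theorem posDef_designMat (hlam : 0 < lam) (k : ℕ) : (designMat d lam φ k).PosDef := by
  induction k with
  | zero => simpa [designMat_zero] using PosDef.one.smul hlam
  | succ k ih =>
    rw [designMat_succ]
    simpa using ih.add_posSemidef (posSemidef_vecMulVec_self_star (φ (k + 1)))

theorem monotone_det_designMat (hlam : 0 < lam) :
    Monotone fun k => (designMat d lam φ k).det := by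
  refine monotone_nat_of_le_succ fun k => ?_
  have hV := posDef_designMat (φ := φ) hlam k
  have hq := hV.inv.posSemidef.dotProduct_mulVec_nonneg (φ (k + 1))
  rw [star_trivial] at hq
  simp only [designMat_succ, det_add_vecMulVec_self hV.det_pos.ne'.isUnit]
  nlinarith [hV.det_pos]

theorem monotone_det_mul_dotProduct_inv_designMat_mulVec (hlam : 0 < lam) (x : Fin d → ℝ) :
    Monotone fun k => (designMat d lam φ k).det * (x ⬝ᵥ (designMat d lam φ k)⁻¹ *ᵥ x) := by
  refine monotone_nat_of_le_succ fun k => ?_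
  have hV := posDef_designMat (φ := φ) hlam k
  simp only [designMat_succ, det_add_vecMulVec_self hV.det_pos.ne'.isUnit, mul_assoc]
  exact mul_le_mul_of_nonneg_left (hV.dotProduct_inv_mulVec_le_mul_add_vecMulVec _ x)
    hV.det_pos.le

theorem det_designMat_le (hlam : 0 < lam) {k : ℕ} {H : ℝ} (hφ : ∀ j ∈ Icc 1 k, φ j ⬝ᵥ φ j ≤ H) :
    (designMat d lam φ k).det ≤ (lam + k * H / d) ^ d := by
  have hV := (posDef_designMat (φ := φ) hlam k).posSemidef
  refine hV.det_le_trace_div_card_pow.trans ?_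
  rw [Fintype.card_fin]
  refine pow_le_pow_left₀ (div_nonneg hV.trace_nonneg d.cast_nonneg) ?_ d
  have hsum : ∑ j ∈ Icc 1 k, φ j ⬝ᵥ φ j ≤ k * H := by
    simpa using sum_le_sum hφ
  rw [trace_designMat, add_div]
  gcongr
  exact div_le_of_le_mul₀ d.cast_nonneg hlam.le le_rfl

theorem four_mul_det_designMat_lt (hlam : 0 < lam) {m k : ℕ} (hmk : m ≤ k) (x : Fin d → ℝ)
    (h : 2 * matNorm (designMat d lam φ k)⁻¹ x < matNorm (designMat d lam φ m)⁻¹ x) :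
    4 * (designMat d lam φ m).det < (designMat d lam φ k).det := by
  have hqk : 0 ≤ x ⬝ᵥ (designMat d lam φ k)⁻¹ *ᵥ x := by
    simpa using (posDef_designMat hlam k).inv.posSemidef.dotProduct_mulVec_nonneg x
  have hsq : 4 * (x ⬝ᵥ (designMat d lam φ k)⁻¹ *ᵥ x) < x ⬝ᵥ (designMat d lam φ m)⁻¹ *ᵥ x := by
    rw [matNorm, matNorm, Real.lt_sqrt (by positivity), mul_pow, Real.sq_sqrt hqk] at h
    linarith
  refine lt_of_mul_lt_mul_right ?_ hqk
  calc 4 * (designMat d lam φ m).det * (x ⬝ᵥ (designMat d lam φ k)⁻¹ *ᵥ x)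
      = (designMat d lam φ m).det * (4 * (x ⬝ᵥ (designMat d lam φ k)⁻¹ *ᵥ x)) := by ring
    _ < (designMat d lam φ m).det * (x ⬝ᵥ (designMat d lam φ m)⁻¹ *ᵥ x) :=
      mul_lt_mul_of_pos_left hsq (posDef_designMat hlam m).det_pos
    _ ≤ _ := monotone_det_mul_dotProduct_inv_designMat_mulVec hlam x hmk

end designMat

def badRounds (K B d : ℕ) (lam : ℝ) (φ : ℕ → Fin d → ℝ) : Finset ℕ :=
  (Icc 1 K).filter fun k =>
    2 * matNorm (designMat d lam φ (k - 1))⁻¹ (φ k) <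
      matNorm (designMat d lam φ (batchStart B k - 1))⁻¹ (φ k)

def badBatches (K B d : ℕ) (lam : ℝ) (φ : ℕ → Fin d → ℝ) : Finset ℕ :=
  (badRounds K B d lam φ).image fun k => (k - 1) / B

section badRounds

variable {K B d : ℕ} {lam : ℝ} {φ : ℕ → Fin d → ℝ}

theorem card_badRounds_le (hB : 0 < B) :
    #(badRounds K B d lam φ) ≤ B * #(badBatches K B d lam φ) :=
  card_le_mul_card_image _ B fun b _ =>
    card_filter_sub_one_div_eq_le hB (fun _ hk => (mem_Icc.mp (mem_filter.mp hk).1).1) b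

theorem badBatches_subset_range (hBK : B ∣ K) : badBatches K B d lam φ ⊆ range (K / B) := by
  simp only [badBatches, badRounds, subset_iff, mem_image, mem_filter, mem_Icc, mem_range]
  rintro _ ⟨k, ⟨⟨hk1, hkK⟩, -⟩, rfl⟩
  exact Nat.div_lt_div_of_lt_of_dvd hBK (by omega)

theorem four_mul_det_designMat_le_of_mem_badBatches (hB : 0 < B) (hlam : 0 < lam) {b : ℕ}
    (hb : b ∈ badBatches K B d lam φ) :
    4 * (designMat d lam φ (B * b)).det ≤ (designMat d lam φ (B * (b + 1))).det := by
  simp only [badBatches, badRounds, mem_image, mem_filter] at hb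
  obtain ⟨k, ⟨-, hbad⟩, rfl⟩ := hb
  have hk : k - 1 ≤ B * ((k - 1) / B + 1) := by
    have := Nat.lt_mul_div_succ (k - 1) hB
    omega
  refine (four_mul_det_designMat_lt hlam ?_ (φ k) hbad).le.trans
    (monotone_det_designMat hlam hk)
  rw [batchStart, Nat.add_sub_cancel]
  exact Nat.mul_div_le (k - 1) B

theorem four_pow_card_badBatches_mul_le_det (hB : 0 < B) (hBK : B ∣ K) (hlam : 0 < lam) :
    4 ^ #(badBatches K B d lam φ) * lam ^ d ≤ (designMat d lam φ K).det := by
  have := pow_card_mul_le_of_monotone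
    ((monotone_det_designMat (φ := φ) hlam).comp (monotone_id.const_mul' B)) (by norm_num)
    (badBatches_subset_range hBK) fun b hb => four_mul_det_designMat_le_of_mem_badBatches hB hlam hb
  simpa [designMat_zero, Nat.mul_div_cancel' hBK] using this

end badRounds

theorem bad_round_count_bound_general
    (K B d : ℕ) (hB : 0 < B) (hBK : B ∣ K)
    (lam : ℝ) (hlam : 0 < lam) (H : ℝ)
    (φ : ℕ → Fin d → ℝ)
    (hφ : ∀ k ∈ Finset.Icc 1 K, φ k ⬝ᵥ φ k ≤ H) :
    ((((Finset.Icc 1 K).filter fun k =>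
        2 * matNorm (designMat d lam φ (k - 1))⁻¹ (φ k) <
          matNorm (designMat d lam φ (batchStart B k - 1))⁻¹ (φ k)).card : ℝ)) ≤
      (B * d / (2 * Real.log 2)) * Real.log (1 + K * H / (d * lam)) := by
  change (#(badRounds K B d lam φ) : ℝ) ≤ _
  set m := #(badBatches K B d lam φ)
  set c := 1 + K * H / (d * lam)
  have hdet : 4 ^ m * lam ^ d ≤ lam ^ d * c ^ d := by
    have hc : lam + K * H / d = lam * c := by
      rw [mul_add, mul_one, mul_div_assoc', mul_comm (d : ℝ), mul_div_mul_left _ _ hlam.ne']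
    rw [← mul_pow, ← hc]
    exact (four_pow_card_badBatches_mul_le_det hB hBK hlam).trans (det_designMat_le hlam hφ)
  have hlog : (m : ℝ) * (2 * Real.log 2) ≤ d * Real.log c := by
    have h4 : Real.log 4 = 2 * Real.log 2 := by
      rw [show (4 : ℝ) = 2 ^ 2 by norm_num, Real.log_pow, Nat.cast_ofNat]
    have hc : (4 : ℝ) ^ m ≤ c ^ d := le_of_mul_le_mul_right (by linarith) (pow_pos hlam d)
    simpa [Real.log_pow, h4] using Real.log_le_log (by positivity) hc
  calc (#(badRounds K B d lam φ) : ℝ) ≤ B * m := by exact_mod_cast card_badRounds_le hB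
    _ ≤ B * (d * Real.log c / (2 * Real.log 2)) := by
      gcongr
      rw [le_div_iff₀ (by positivity)]
      exact hlog
    _ = B * d / (2 * Real.log 2) * Real.log c := by ring

/-- Bound on the number of bad rounds, established via a determinant argument
in the proof of Lemma D.1 of the paper. -/
theorem bad_round_count_bound
    (K B d : ℕ) (hK : 0 < K) (hB : 0 < B) (hd : 0 < d) (hBK : B ∣ K)
    (lam : ℝ) (hlam : 0 < lam) (H : ℝ) (hH : 0 < H)
    (φ : ℕ → Fin d → ℝ)
    (hφ : ∀ k ∈ Finset.Icc 1 K, φ k ⬝ᵥ φ k ≤ H) :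
    ((((Finset.Icc 1 K).filter fun k =>
        2 * matNorm (designMat d lam φ (k - 1))⁻¹ (φ k) <
          matNorm (designMat d lam φ (batchStart B k - 1))⁻¹ (φ k)).card : ℝ)) ≤
      (B * d / (2 * Real.log 2)) * Real.log (1 + K * H / (d * lam)) :=
  bad_round_count_bound_general K B d hB hBK lam hlam H φ hφ
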